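/- Let x_{n,m} = A_{n,m}† A x† with x† ∈ N(A)^⊥. Then x_{n,m} → x† strongly as n, m → ∞ if and only if limsup_{n,m} ‖x_{n,m}‖ ≤ ‖x†‖. (No condition on the nullspace discretization is needed for this equivalence.) -/

import Mathlib

open ContinuousLinearMap Filter Topology

noncomputable section

/-- Orthogonal projection onto a subspace, as an endomorphism. -/
noncomputable def proj {E : Type*} [NormedAddCommGroup E] [InnerProductSpace ℝ E]
    (K : Submodule ℝ E) [Submodule.HasOrthogonalProjection K] : E →L[ℝ] E :=
  K.subtypeL.comp (Submodule.orthogonalProjectionOnto K : E →L[ℝ] K)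

/-- The discretized operator `A_{n,m} = Q_m A P_n`. -/
noncomputable def Amn {X Y : Type*} [NormedAddCommGroup X] [InnerProductSpace ℝ X]
    [NormedAddCommGroup Y] [InnerProductSpace ℝ Y]
    (A : X →L[ℝ] Y) (Xn : Submodule ℝ X) (Ym : Submodule ℝ Y)
    [Submodule.HasOrthogonalProjection Xn] [Submodule.HasOrthogonalProjection Ym] : X →L[ℝ] Y :=
  (proj Ym).comp (A.comp (proj Xn))

/-- `B` is the Moore–Penrose pseudoinverse of `A` (the four Penrose conditions). -/
def IsPseudoinverse {X Y : Type*} [NormedAddCommGroup X] [InnerProductSpace ℝ X]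
    [CompleteSpace X] [NormedAddCommGroup Y] [InnerProductSpace ℝ Y] [CompleteSpace Y]
    (A : X →L[ℝ] Y) (B : Y →L[ℝ] X) : Prop :=
  A.comp (B.comp A) = A ∧ B.comp (A.comp B) = B ∧
  ContinuousLinearMap.adjoint (A.comp B) = A.comp B ∧
  ContinuousLinearMap.adjoint (B.comp A) = B.comp A

open RealInnerProductSpace

section Helpers

variable {E : Type*} [NormedAddCommGroup E] [InnerProductSpace ℝ E]

lemma proj_mem (K : Submodule ℝ E) [Submodule.HasOrthogonalProjection K] (v : E) : proj K v ∈ K :=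
  (Submodule.orthogonalProjectionOnto K v).2

lemma proj_eq_self {K : Submodule ℝ E} [Submodule.HasOrthogonalProjection K] {v : E} (hv : v ∈ K) :
    proj K v = v := Submodule.starProjection_eq_self_iff.mpr hv

lemma proj_inner (K : Submodule ℝ E) [Submodule.HasOrthogonalProjection K] (u v : E) :
    ⟪proj K u, v⟫ = ⟪u, proj K v⟫ :=
  Submodule.inner_starProjection_left_eq_right K u v

lemma proj_zero_of_mem_orthogonal {K : Submodule ℝ E} [Submodule.HasOrthogonalProjection K] {v : E}
    (hv : v ∈ Kᗮ) : proj K v = 0 := by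
  show (K.subtypeL.comp (Submodule.orthogonalProjectionOnto K : E →L[ℝ] K)) v = 0
  simp [Submodule.orthogonalProjectionOnto_apply_of_mem_orthogonal hv]

lemma norm_proj_le (K : Submodule ℝ E) [Submodule.HasOrthogonalProjection K] (v : E) :
    ‖proj K v‖ ≤ ‖v‖ := by
  have := (Submodule.orthogonalProjectionOnto K).le_opNorm v
  calc ‖proj K v‖ = ‖Submodule.orthogonalProjectionOnto K v‖ := rfl
    _ ≤ ‖Submodule.orthogonalProjectionOnto K‖ * ‖v‖ := this
    _ ≤ 1 * ‖v‖ := by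
        gcongr; exact Submodule.orthogonalProjectionOnto_norm_le K
    _ = ‖v‖ := one_mul _

lemma norm_proj_sub_le (K : Submodule ℝ E) [Submodule.HasOrthogonalProjection K] (v u : E) (hu : u ∈ K) :
    ‖proj K v - v‖ ≤ ‖u - v‖ := by
  have h := Submodule.starProjection_minimal (U := K) v
  have : ‖v - proj K v‖ ≤ ‖v - u‖ := by
    rw [show (proj K v : E) = K.starProjection v from rfl, h]
    exact ciInf_le ⟨0, by rintro r ⟨x, rfl⟩; positivity⟩ (⟨u, hu⟩ : K)
  rw [norm_sub_rev] at this ⊢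
  simpa [norm_sub_rev] using this

lemma tendsto_proj_atTop {K : ℕ → Submodule ℝ E} [∀ n, Submodule.HasOrthogonalProjection (K n)]
    (hm : Monotone K) (hd : Dense (↑(⨆ n, K n) : Set E)) (v : E) :
    Tendsto (fun n => proj (K n) v) atTop (nhds v) := by
  rw [tendsto_iff_norm_sub_tendsto_zero]
  rw [Metric.tendsto_atTop]
  intro ε hε
  obtain ⟨u, hub, hus⟩ := Metric.dense_iff.mp hd v ε hε
  obtain ⟨N, hN⟩ := (Submodule.mem_iSup_of_directed _ (hm.directed_le)).mp hus
  refine ⟨N, fun n hn => ?_⟩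
  have hmem : u ∈ K n := hm hn hN
  have := norm_proj_sub_le (K n) v u hmem
  rw [Real.dist_eq]
  calc |‖proj (K n) v - v‖ - 0| = ‖proj (K n) v - v‖ := by simp [abs_of_nonneg, norm_nonneg]
    _ ≤ ‖u - v‖ := this
    _ < ε := by rw [← dist_eq_norm]; rwa [Metric.mem_ball] at hub

end Helpers

section PsHelpers

variable {X Y : Type*} [NormedAddCommGroup X] [InnerProductSpace ℝ X] [CompleteSpace X]
  [NormedAddCommGroup Y] [InnerProductSpace ℝ Y] [CompleteSpace Y]
  {T : X →L[ℝ] Y} {B : Y →L[ℝ] X}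

lemma ps_aba (hp : IsPseudoinverse T B) (x : X) : T (B (T x)) = T x := by
  have := DFunLike.congr_fun hp.1 x
  simpa using this

lemma ps_bab (hp : IsPseudoinverse T B) (y : Y) : B (T (B y)) = B y := by
  have := DFunLike.congr_fun hp.2.1 y
  simpa using this

lemma ps_inner_ab (hp : IsPseudoinverse T B) (u v : Y) :
    ⟪T (B u), v⟫ = ⟪u, T (B v)⟫ := by
  have h := hp.2.2.1
  have := ContinuousLinearMap.adjoint_inner_left (T.comp B) u v
  rw [h] at this
  calc ⟪T (B u), v⟫ = ⟪T (B v), u⟫ := by simpa [real_inner_comm] using this.symm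
    _ = ⟪u, T (B v)⟫ := real_inner_comm _ _

lemma ps_min (hp : IsPseudoinverse T B) (w : Y) (z : X) :
    ‖T (B w) - w‖ ≤ ‖T z - w‖ := by
  have horth : ⟪T z - T (B w), T (B w) - w⟫ = 0 := by
    have h1 : T z - T (B w) = T (B (T z - w)) := by
      rw [map_sub, map_sub, ps_aba hp]
    rw [h1, ps_inner_ab hp]
    have h2 : T (B (T (B w) - w)) = 0 := by
      rw [map_sub, map_sub, ps_aba hp, sub_self]
    rw [h2, inner_zero_right]
  have hsq : ‖T (B w) - w‖ ^ 2 ≤ ‖T z - w‖ ^ 2 := by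
    have : T z - w = (T z - T (B w)) + (T (B w) - w) := by abel
    rw [this, norm_add_sq_real, horth]
    nlinarith [norm_nonneg (T z - T (B w))]
  exact le_of_pow_le_pow_left₀ two_ne_zero (norm_nonneg _) hsq

lemma ps_mem (hp : IsPseudoinverse T B) (J : Submodule ℝ X) [CompleteSpace J]
    (hker : ∀ z ∈ Jᗮ, T z = 0) (y : Y) : B y ∈ J := by
  rw [← ps_bab hp y, ← Submodule.orthogonal_orthogonal J, Submodule.mem_orthogonal]
  intro u hu
  have h1 : ⟪u, B (T (B y))⟫ = ⟪B (T u), B y⟫ := by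
    have := ContinuousLinearMap.adjoint_inner_right (B.comp T) u (B y)
    rw [hp.2.2.2] at this
    simpa using this
  rw [h1, hker u hu, map_zero, inner_zero_left]

end PsHelpers

set_option maxHeartbeats 1000000 in
/-- `x_{n,m} → x†` strongly iff `limsup ‖x_{n,m}‖ ≤ ‖x†‖` (limsup in `ℝ≥0∞`). -/
theorem stmt_18 {X Y : Type*} [NormedAddCommGroup X] [InnerProductSpace ℝ X] [CompleteSpace X]
    [NormedAddCommGroup Y] [InnerProductSpace ℝ Y] [CompleteSpace Y]
    (A : X →L[ℝ] Y) (Xn : ℕ → Submodule ℝ X) (Ym : ℕ → Submodule ℝ Y)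
    [∀ n, FiniteDimensional ℝ (Xn n)] [∀ m, FiniteDimensional ℝ (Ym m)]
    (hX : Monotone Xn) (hY : Monotone Ym)
    (hdX : Dense (↑(⨆ n, Xn n) : Set X)) (hdY : Dense (↑(⨆ m, Ym m) : Set Y))
    (Adag : ℕ → ℕ → (Y →L[ℝ] X))
    (hdag : ∀ n m, IsPseudoinverse (Amn A (Xn n) (Ym m)) (Adag n m))
    (xd : X) (hxd : xd ∈ (LinearMap.ker (A : X →ₗ[ℝ] Y))ᗮ) :
    Tendsto (fun p : ℕ × ℕ => Adag p.1 p.2 (A xd)) atTop (nhds xd) ↔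
    Filter.limsup (fun p : ℕ × ℕ => (‖Adag p.1 p.2 (A xd)‖₊ : ENNReal)) atTop
      ≤ (‖xd‖₊ : ENNReal) := by
  classical
  set x : ℕ × ℕ → X := fun p => Adag p.1 p.2 (A xd) with hxdef
  set T : ℕ × ℕ → (X →L[ℝ] Y) := fun p => Amn A (Xn p.1) (Ym p.2) with hTdef
  have hp : ∀ p : ℕ × ℕ, IsPseudoinverse (T p) (Adag p.1 p.2) := fun p => hdag p.1 p.2
  constructor
  · -- easy direction
    intro h
    have hn : Tendsto (fun p : ℕ × ℕ => (‖x p‖₊ : ENNReal)) atTop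
        (nhds ((‖xd‖₊ : ENNReal))) :=
      ENNReal.tendsto_coe.mpr ((continuous_nnnorm.tendsto xd).comp h)
    exact hn.limsup_eq.le
  · intro h
    -- Step A: eventual norm bounds
    have hbound : ∀ δ : ℝ, 0 < δ → ∀ᶠ p : ℕ × ℕ in atTop, ‖x p‖ < ‖xd‖ + δ := by
      intro δ hδ
      have hlt : Filter.limsup (fun p : ℕ × ℕ => (‖x p‖₊ : ENNReal)) atTop
          < (((‖xd‖₊ + δ.toNNReal : NNReal)) : ENNReal) := by
        refine lt_of_le_of_lt h ?_
        rw [ENNReal.coe_lt_coe]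
        exact lt_add_of_pos_right _ (Real.toNNReal_pos.mpr hδ)
      filter_upwards [eventually_lt_of_limsup_lt hlt] with p hp2
      have h3 : ‖x p‖₊ < ‖xd‖₊ + δ.toNNReal := ENNReal.coe_lt_coe.mp hp2
      have h4 := NNReal.coe_lt_coe.mpr h3
      rw [NNReal.coe_add, coe_nnnorm, coe_nnnorm, Real.coe_toNNReal δ hδ.le] at h4
      exact h4
    have hC : ∀ᶠ p : ℕ × ℕ in atTop, ‖x p‖ ≤ ‖xd‖ + 1 :=
      (hbound 1 one_pos).mono fun p hp' => hp'.le
    set C : ℝ := ‖xd‖ + 1 with hCdef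
    have hC0 : 0 < C := by positivity
    -- x p lies in Xn p.1
    have hker : ∀ p : ℕ × ℕ, ∀ z ∈ (Xn p.1)ᗮ, T p z = 0 := by
      intro p z hz
      show Amn A (Xn p.1) (Ym p.2) z = 0
      simp [Amn, ContinuousLinearMap.comp_apply, proj_zero_of_mem_orthogonal hz]
    have hmemX : ∀ p : ℕ × ℕ, x p ∈ Xn p.1 := fun p =>
      ps_mem (hp p) (Xn p.1) (hker p) (A xd)
    -- projections converge
    have hP : Tendsto (fun p : ℕ × ℕ => proj (Xn p.1) xd) atTop (nhds xd) := by
      refine (tendsto_proj_atTop hX hdX xd).comp ?_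
      rw [← prod_atTop_atTop_eq]; exact tendsto_fst
    have hQ : ∀ v : Y, Tendsto (fun p : ℕ × ℕ => proj (Ym p.2) v) atTop (nhds v) := by
      intro v
      refine (tendsto_proj_atTop hY hdY v).comp ?_
      rw [← prod_atTop_atTop_eq]; exact tendsto_snd
    -- Step B: T p (x p) → A xd
    have hTxd : Tendsto (fun p : ℕ × ℕ => T p xd) atTop (nhds (A xd)) := by
      have hy : Tendsto (fun p : ℕ × ℕ => A (proj (Xn p.1) xd)) atTop (nhds (A xd)) :=
        (A.continuous.tendsto xd).comp hP
      rw [tendsto_iff_norm_sub_tendsto_zero] at hy ⊢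
      refine squeeze_zero (fun p => norm_nonneg _) (g := fun p =>
        ‖A (proj (Xn p.1) xd) - A xd‖ + ‖proj (Ym p.2) (A xd) - A xd‖) ?_ ?_
      · intro p
        have heq : T p xd - A xd =
            (proj (Ym p.2) (A (proj (Xn p.1) xd)) - proj (Ym p.2) (A xd))
            + (proj (Ym p.2) (A xd) - A xd) := by
          show Amn A (Xn p.1) (Ym p.2) xd - A xd = _
          simp only [Amn, ContinuousLinearMap.comp_apply]
          abel
        rw [heq]
        refine le_trans (norm_add_le _ _) (add_le_add_left ?_ _)
        rw [← map_sub]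
        exact norm_proj_le _ _
      · have h2 : Tendsto (fun p : ℕ × ℕ => ‖proj (Ym p.2) (A xd) - A xd‖) atTop (nhds 0) := by
          have := (hQ (A xd))
          rw [tendsto_iff_norm_sub_tendsto_zero] at this
          exact this
        simpa using hy.add h2
    have hTB : Tendsto (fun p : ℕ × ℕ => T p (x p)) atTop (nhds (A xd)) := by
      rw [tendsto_iff_norm_sub_tendsto_zero] at hTxd ⊢
      refine squeeze_zero (fun p => norm_nonneg _)
        (g := fun p => ‖T p xd - A xd‖) (fun p => ?_) hTxd
      exact ps_min (hp p) (A xd) xd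
    -- Step C: weak-type convergence of A (x p)
    have hAx : ∀ u : Y, Tendsto (fun p : ℕ × ℕ => ⟪A (x p), u⟫) atTop (nhds ⟪A xd, u⟫) := by
      intro u
      have hdecomp : ∀ p : ℕ × ℕ,
          ⟪A (x p), u⟫ = ⟪T p (x p), u⟫ + ⟪A (x p), u - proj (Ym p.2) u⟫ := by
        intro p
        have h1 : T p (x p) = proj (Ym p.2) (A (x p)) := by
          show Amn A (Xn p.1) (Ym p.2) (x p) = _
          simp only [Amn, ContinuousLinearMap.comp_apply]
          rw [proj_eq_self (hmemX p)]
        rw [h1, proj_inner, inner_sub_right]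
        ring
      have h1 : Tendsto (fun p : ℕ × ℕ => ⟪T p (x p), u⟫) atTop (nhds ⟪A xd, u⟫) :=
        hTB.inner tendsto_const_nhds
      have h2 : Tendsto (fun p : ℕ × ℕ => ⟪A (x p), u - proj (Ym p.2) u⟫) atTop (nhds 0) := by
        refine squeeze_zero_norm' (a := fun p : ℕ × ℕ => (‖A‖ * C) * ‖u - proj (Ym p.2) u‖) ?_ ?_
        · filter_upwards [hC] with p hCp
          calc ‖⟪A (x p), u - proj (Ym p.2) u⟫‖
              ≤ ‖A (x p)‖ * ‖u - proj (Ym p.2) u‖ := norm_inner_le_norm _ _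
            _ ≤ (‖A‖ * C) * ‖u - proj (Ym p.2) u‖ := by
                gcongr
                calc ‖A (x p)‖ ≤ ‖A‖ * ‖x p‖ := A.le_opNorm _
                  _ ≤ ‖A‖ * C := mul_le_mul_of_nonneg_left hCp (norm_nonneg A)
        · have h3 : Tendsto (fun p : ℕ × ℕ => ‖u - proj (Ym p.2) u‖) atTop (nhds 0) := by
            have := hQ u
            rw [tendsto_iff_norm_sub_tendsto_zero] at this
            simpa [norm_sub_rev] using this
          simpa using h3.const_mul (‖A‖ * C)
      have := h1.add h2
      rw [add_zero] at this
      refine this.congr fun p => (hdecomp p).symm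
    -- density of range of adjoint in (ker A)ᗮ
    have hker_eq : LinearMap.ker (A : X →ₗ[ℝ] Y) = (LinearMap.range (ContinuousLinearMap.adjoint A : Y →ₗ[ℝ] X))ᗮ := by
      ext z
      rw [LinearMap.mem_ker, ContinuousLinearMap.coe_coe, Submodule.mem_orthogonal]
      constructor
      · rintro hz u ⟨v, rfl⟩
        rw [ContinuousLinearMap.coe_coe, ContinuousLinearMap.adjoint_inner_left, hz, inner_zero_right]
      · intro hz
        have := hz (ContinuousLinearMap.adjoint A (A z)) ⟨A z, rfl⟩
        rw [ContinuousLinearMap.adjoint_inner_left] at this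
        exact inner_self_eq_zero.mp this
    have hxd_cl : xd ∈ (LinearMap.range (ContinuousLinearMap.adjoint A : Y →ₗ[ℝ] X)).topologicalClosure := by
      rw [← Submodule.orthogonal_orthogonal_eq_closure, ← hker_eq]
      exact hxd
    have happrox : ∀ δ : ℝ, 0 < δ → ∃ u : Y,
        ‖ContinuousLinearMap.adjoint A u - xd‖ < δ := by
      intro δ hδ
      have hcl : xd ∈ closure ((LinearMap.range (ContinuousLinearMap.adjoint A : Y →ₗ[ℝ] X) : Submodule ℝ X)
          : Set X) := hxd_cl
      obtain ⟨b, hb, hbd⟩ := Metric.mem_closure_iff.mp hcl δ hδ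
      obtain ⟨u, rfl⟩ := hb
      exact ⟨u, by rwa [← dist_eq_norm, dist_comm]⟩
    -- Step D: ⟪x p, xd⟫ → ‖xd‖²
    have hinner : Tendsto (fun p : ℕ × ℕ => ⟪x p, xd⟫) atTop (nhds (‖xd‖ ^ 2)) := by
      rw [Metric.tendsto_nhds]
      intro ε hε
      set δ : ℝ := ε / (2 * (C + ‖xd‖ + 1)) with hδdef
      have hδ : 0 < δ := by positivity
      obtain ⟨u, hu⟩ := happrox δ hδ
      have hmid := Metric.tendsto_nhds.mp (hAx u) (ε / 2) (by positivity)
      filter_upwards [hC, hmid] with p hCp hmidp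
      rw [Real.dist_eq]
      have hsplit : ⟪x p, xd⟫ - ‖xd‖ ^ 2 =
          ⟪x p, xd - ContinuousLinearMap.adjoint A u⟫
          + (⟪A (x p), u⟫ - ⟪A xd, u⟫)
          + ⟪xd, ContinuousLinearMap.adjoint A u - xd⟫ := by
        have e1 : ⟪A (x p), u⟫ = ⟪x p, ContinuousLinearMap.adjoint A u⟫ :=
          (ContinuousLinearMap.adjoint_inner_right A (x p) u).symm
        have e2 : ⟪A xd, u⟫ = ⟪xd, ContinuousLinearMap.adjoint A u⟫ :=
          (ContinuousLinearMap.adjoint_inner_right A xd u).symm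
        rw [e1, e2, inner_sub_right, inner_sub_right, ← real_inner_self_eq_norm_sq]
        ring
      rw [hsplit]
      have hb1 : |⟪x p, xd - ContinuousLinearMap.adjoint A u⟫| ≤ C * δ := by
        refine le_trans (abs_real_inner_le_norm _ _) ?_
        have : ‖xd - ContinuousLinearMap.adjoint A u‖ < δ := by
          rwa [norm_sub_rev]
        exact mul_le_mul hCp this.le (norm_nonneg _) hC0.le
      have hb3 : |⟪xd, ContinuousLinearMap.adjoint A u - xd⟫| ≤ ‖xd‖ * δ := by
        refine le_trans (abs_real_inner_le_norm _ _) ?_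
        exact mul_le_mul le_rfl hu.le (norm_nonneg _) (norm_nonneg _)
      have hb2 : |⟪A (x p), u⟫ - ⟪A xd, u⟫| < ε / 2 := by
        rwa [Real.dist_eq] at hmidp
      have habs : |⟪x p, xd - ContinuousLinearMap.adjoint A u⟫
          + (⟪A (x p), u⟫ - ⟪A xd, u⟫)
          + ⟪xd, ContinuousLinearMap.adjoint A u - xd⟫|
          ≤ |⟪x p, xd - ContinuousLinearMap.adjoint A u⟫|
          + |⟪A (x p), u⟫ - ⟪A xd, u⟫|
          + |⟪xd, ContinuousLinearMap.adjoint A u - xd⟫| := by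
        refine le_trans (abs_add_le _ _) ?_
        gcongr
        exact abs_add_le _ _
      refine lt_of_le_of_lt habs ?_
      have hδle : (C + ‖xd‖) * δ < ε / 2 := by
        have hpos : (0:ℝ) < 2 * (C + ‖xd‖ + 1) := by positivity
        have h2 : (C + ‖xd‖) * δ < (C + ‖xd‖ + 1) * δ := by nlinarith [hδ]
        have h3 : (C + ‖xd‖ + 1) * δ = ε / 2 := by
          rw [hδdef]; field_simp
        linarith
      nlinarith [hb1, hb2, hb3, norm_nonneg xd]
    -- Step E: conclude strong convergence
    rw [tendsto_iff_norm_sub_tendsto_zero]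
    rw [Metric.tendsto_nhds]
    intro ε hε
    set δ : ℝ := min 1 (ε ^ 2 / (2 * ‖xd‖ + 3)) with hδdef
    have hδ : 0 < δ := by
      apply lt_min one_pos
      positivity
    have hδ1 : δ ≤ 1 := min_le_left _ _
    have hδ2 : δ * (2 * ‖xd‖ + 3) ≤ ε ^ 2 := by
      have h1 : δ ≤ ε ^ 2 / (2 * ‖xd‖ + 3) := min_le_right _ _
      have hpos : (0:ℝ) < 2 * ‖xd‖ + 3 := by positivity
      calc δ * (2 * ‖xd‖ + 3) ≤ (ε ^ 2 / (2 * ‖xd‖ + 3)) * (2 * ‖xd‖ + 3) := by gcongr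
        _ = ε ^ 2 := by field_simp
    have hev1 := hbound δ hδ
    have hev2 := Metric.tendsto_nhds.mp hinner δ hδ
    filter_upwards [hev1, hev2] with p hb hi
    rw [Real.dist_eq, sub_zero, abs_of_nonneg (norm_nonneg _)]
    rw [Real.dist_eq] at hi
    have hi' : ⟪x p, xd⟫ > ‖xd‖ ^ 2 - δ := by
      have := (abs_lt.mp hi).1
      linarith
    have hsq : ‖x p - xd‖ ^ 2 < ε ^ 2 := by
      rw [norm_sub_sq_real]
      nlinarith [norm_nonneg (x p), norm_nonneg xd, hb, hi', hδ1, hδ2, hδ]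
    exact lt_of_pow_lt_pow_left₀ 2 hε.le hsq
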